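/- Inverted representation of q-Charlier polynomials: for a nonnegative integer m and x ≠ 0 with (x^{-1} q^{1-m};q)_m well-defined, c_m(x; a; q) = (-a)^{-m} q^{m²} x^m (x^{-1} q^{1-m};q)_m · ₁φ₁(q^{-m}; x^{-1} q^{1-m}; q, -a q^{1-m}/x). -/

import Mathlib

/-- The q-shifted factorial `(a;q)_k`. -/
noncomputable def qp (q a : ℂ) (k : ℕ) : ℂ := ∏ i ∈ Finset.range k, (1 - a * q ^ i)

/-- `₁φ₁(a; b; q, z)`. -/
noncomputable def phi11 (q a b z : ℂ) : ℂ :=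
  ∑' k : ℕ, qp q a k / (qp q q k * qp q b k) * (-1) ^ k * q ^ (k * (k - 1) / 2) * z ^ k

/-- The q-Charlier polynomial `c_m(x; a; q)`. -/
noncomputable def qCharlier (q a x : ℂ) (m : ℕ) : ℂ :=
  ∑ k ∈ Finset.range (m + 1),
    qp q ((q : ℂ) ^ (-(m : ℤ))) k * qp q x k / qp q q k * (-(q ^ (m + 1)) / a) ^ k

theorem qp_zero (q a : ℂ) : qp q a 0 = 1 := Finset.prod_range_zero _

theorem qp_succ (q a : ℂ) (k : ℕ) : qp q a (k+1) = qp q a k * (1 - a * q ^ k) :=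
  Finset.prod_range_succ _ _

theorem tri_succ (j:ℕ) : (j+1)*j/2 = j*(j-1)/2 + j := by
  obtain ⟨t,ht⟩ := (Nat.even_mul_pred_self j).two_dvd
  have key : (j+1)*j = j*(j-1) + 2*j := by cases j with
    | zero => rfl
    | succ n => simp only [Nat.add_sub_cancel]; ring
  omega

theorem lemA (Q : ℂ) (hQ : Q ≠ 0) (m : ℕ) : ∀ j, j ≤ m →
    qp Q (Q ^ (-(m:ℤ))) j * qp Q Q (m - j) =
      qp Q Q m * (-1)^j * Q ^ ((j*(j-1)/2 : ℕ) - (m*j : ℤ)) := by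
  intro j
  induction j with
  | zero => intro _; simp [qp_zero]
  | succ j ih =>
    intro hj
    have hjm : j < m := hj
    have ihj := ih (le_of_lt hjm)
    have h1 : Q ^ (-(m:ℤ)) * Q ^ j = Q ^ ((j:ℤ) - m) := by
      rw [← zpow_natCast Q j, ← zpow_add₀ hQ]; ring_nf
    have h2 : Q * Q ^ (m - (j+1)) = Q ^ ((m:ℤ) - j) := by
      rw [← zpow_natCast Q (m - (j+1)), ← zpow_one_add₀ hQ]
      congr 1; omega
    have h3 : Q ^ ((m:ℤ)-j) * Q ^ ((j:ℤ)-m) = 1 := by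
      rw [← zpow_add₀ hQ]; norm_num
    have key : (1 - Q ^ (-(m:ℤ)) * Q ^ j) = (1 - Q * Q ^ (m - (j+1))) * (-(Q ^ ((j:ℤ) - m))) := by
      rw [h1, h2]; linear_combination -h3
    have hsplit : m - j = (m - (j+1)) + 1 := by omega
    calc qp Q (Q ^ (-(m:ℤ))) (j+1) * qp Q Q (m - (j+1))
        = (qp Q (Q ^ (-(m:ℤ))) j * (qp Q Q (m - (j+1)) * (1 - Q * Q ^ (m - (j+1)))))
            * (-(Q ^ ((j:ℤ) - m))) := by rw [qp_succ, key]; ring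
      _ = (qp Q (Q ^ (-(m:ℤ))) j * qp Q Q (m - j)) * (-(Q ^ ((j:ℤ) - m))) := by
            rw [hsplit, qp_succ]
      _ = qp Q Q m * (-1)^j * Q ^ ((j*(j-1)/2 : ℕ) - (m*j : ℤ)) * (-(Q ^ ((j:ℤ) - m))) := by
            rw [ihj]
      _ = qp Q Q m * (-1)^(j+1) * Q ^ (((j+1)*(j+1-1)/2 : ℕ) - (m*(j+1) : ℤ)) := by
            rw [show ((j+1)*(j+1-1)/2 : ℕ) = j*(j-1)/2 + j from by simpa using tri_succ j]
            rw [show (((j*(j-1)/2 + j : ℕ)) - (m*(j+1) : ℤ)) = (((j*(j-1)/2 : ℕ)) - (m*j : ℤ)) + ((j:ℤ) - m) from by push_cast; ring]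
            rw [zpow_add₀ hQ]
            ring

theorem lemB (Q x : ℂ) (hQ : Q ≠ 0) (hx : x ≠ 0) (m : ℕ) : ∀ j, j ≤ m →
    qp Q x j * qp Q (x⁻¹ * Q^((1:ℤ)-m)) (m-j) =
      qp Q (x⁻¹ * Q^((1:ℤ)-m)) m * x^j * Q^(j*(j-1)/2) * (-1)^j := by
  intro j
  induction j with
  | zero => intro _; simp [qp_zero]
  | succ j ih =>
    intro hj
    have hjm : j < m := hj
    have ihj := ih (le_of_lt hjm)
    have hb : (x⁻¹ * Q^((1:ℤ)-m)) * Q^(m-(j+1)) = x⁻¹ * Q^(-(j:ℤ)) := by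
      rw [← zpow_natCast Q (m-(j+1)), mul_assoc, ← zpow_add₀ hQ]
      congr 2
      omega
    have h3 : (x⁻¹ * Q^(-(j:ℤ))) * (x * Q^j) = 1 := by
      rw [← zpow_natCast Q j]
      have h4 : Q^(-(j:ℤ)) * Q^((j:ℕ):ℤ) = 1 := by rw [← zpow_add₀ hQ]; norm_num
      field_simp
      exact h4
    have key : (1 - x * Q^j) = (1 - (x⁻¹ * Q^((1:ℤ)-m)) * Q^(m-(j+1))) * (-(x * Q^j)) := by
      rw [hb]; linear_combination -h3
    have hsplit : m - j = (m - (j+1)) + 1 := by omega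
    calc qp Q x (j+1) * qp Q (x⁻¹ * Q^((1:ℤ)-m)) (m-(j+1))
        = (qp Q x j * (qp Q (x⁻¹ * Q^((1:ℤ)-m)) (m-(j+1)) *
            (1 - (x⁻¹ * Q^((1:ℤ)-m)) * Q^(m-(j+1))))) * (-(x * Q^j)) := by
          rw [qp_succ, key]; ring
      _ = (qp Q x j * qp Q (x⁻¹ * Q^((1:ℤ)-m)) (m-j)) * (-(x * Q^j)) := by
          rw [hsplit, qp_succ]
      _ = (qp Q (x⁻¹ * Q^((1:ℤ)-m)) m * x^j * Q^(j*(j-1)/2) * (-1)^j) * (-(x * Q^j)) := by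
          rw [ihj]
      _ = qp Q (x⁻¹ * Q^((1:ℤ)-m)) m * x^(j+1) * Q^((j+1)*(j+1-1)/2) * (-1)^(j+1) := by
          rw [show ((j+1)*(j+1-1)/2 : ℕ) = j*(j-1)/2 + j from by simpa using tri_succ j,
            pow_add, pow_succ, pow_succ]
          ring

theorem tri_cast (d : ℕ) : 2 * ((d*(d-1)/2 : ℕ) : ℤ) = (d:ℤ)*d - d := by
  have h2 : 2 * (d*(d-1)/2) = d*(d-1) :=
    Nat.mul_div_cancel' (Nat.even_mul_pred_self d).two_dvd
  have h3 : ((d*(d-1) : ℕ) : ℤ) = (d:ℤ)*d - d := by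
    cases d with
    | zero => simp
    | succ n => push_cast [Nat.add_sub_cancel]; ring
  rw [← h3]
  conv_rhs => rw [← h2]
  push_cast
  ring

theorem qp_q_ne (q : ℝ) (hq0 : 0 < q) (hq1 : q < 1) (n : ℕ) : qp (q:ℂ) (q:ℂ) n ≠ 0 := by
  rw [qp]
  rw [Finset.prod_ne_zero_iff]
  intro i _
  have hlt : q ^ (i+1) < 1 := pow_lt_one₀ (le_of_lt hq0) hq1 (Nat.succ_ne_zero i)
  have : ((1 - q ^ (i+1) : ℝ) : ℂ) ≠ 0 := by
    rw [Complex.ofReal_ne_zero]; linarith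
  convert this using 2
  push_cast [pow_succ]
  ring

theorem qp_b_ne (q : ℝ) (hq0 : 0 < q) (x : ℂ) (m : ℕ)
    (hden : ∀ j : ℕ, j < m → x⁻¹ * (q : ℂ) ^ ((1 : ℤ) - m) ≠ (q : ℂ) ^ (-(j : ℤ)))
    (k : ℕ) (hk : k ≤ m) : qp (q:ℂ) (x⁻¹ * (q:ℂ) ^ ((1:ℤ) - m)) k ≠ 0 := by
  have hQ : (q:ℂ) ≠ 0 := by
    simpa using (Complex.ofReal_ne_zero.mpr (ne_of_gt hq0))
  rw [qp, Finset.prod_ne_zero_iff]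
  intro i hi
  have him : i < m := lt_of_lt_of_le (Finset.mem_range.mp hi) hk
  intro hzero
  apply hden i him
  have hmul : (x⁻¹ * (q:ℂ) ^ ((1:ℤ) - m)) * (q:ℂ) ^ i = 1 := by
    linear_combination -hzero
  rw [eq_inv_of_mul_eq_one_left hmul, zpow_neg, zpow_natCast]

theorem qp_vanish (q : ℝ) (hq0 : 0 < q) (m k : ℕ) (hk : m < k) :
    qp (q:ℂ) ((q:ℂ) ^ (-(m:ℤ))) k = 0 := by
  have hQ : (q:ℂ) ≠ 0 := by
    simpa using (Complex.ofReal_ne_zero.mpr (ne_of_gt hq0))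
  rw [qp]
  apply Finset.prod_eq_zero (Finset.mem_range.mpr hk)
  have : (q:ℂ) ^ (-(m:ℤ)) * (q:ℂ) ^ m = 1 := by
    rw [← zpow_natCast (q:ℂ) m, ← zpow_add₀ hQ]; norm_num
  rw [this]; ring

theorem hQL (q : ℝ) (hQ : (q:ℂ) ≠ 0) (k d : ℕ) :
    (q:ℂ) ^ (((d*(d-1)/2 : ℕ) : ℤ) - ((k+d : ℕ):ℤ) * (d:ℤ)) *
      ((q:ℂ) ^ (d*(d-1)/2) * ((q:ℂ) ^ (k+d+1)) ^ d) = (q:ℂ) ^ (d*d) := by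
  rw [← zpow_natCast (q:ℂ) (d*(d-1)/2), ← zpow_natCast (q:ℂ) (k+d+1),
    ← zpow_natCast (((q:ℂ)) ^ (((k+d+1 : ℕ)):ℤ)) d, ← zpow_mul,
    ← zpow_add₀ hQ, ← zpow_add₀ hQ, ← zpow_natCast (q:ℂ) (d*d)]
  congr 1
  have t := tri_cast d
  push_cast at t ⊢
  linear_combination t

theorem hQR (q : ℝ) (hQ : (q:ℂ) ≠ 0) (k d : ℕ) :
    (q:ℂ) ^ ((k+d)^2) *
      ((q:ℂ) ^ (((k*(k-1)/2 : ℕ) : ℤ) - ((k+d : ℕ):ℤ) * (k:ℤ)) *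
        ((q:ℂ) ^ (k*(k-1)/2) * ((q:ℂ) ^ ((1:ℤ) - ((k+d:ℕ):ℤ))) ^ k)) = (q:ℂ) ^ (d*d) := by
  rw [← zpow_natCast (q:ℂ) ((k+d)^2), ← zpow_natCast (q:ℂ) (k*(k-1)/2),
    ← zpow_natCast (((q:ℂ)) ^ ((1:ℤ) - ((k+d:ℕ):ℤ))) k, ← zpow_mul,
    ← zpow_add₀ hQ, ← zpow_add₀ hQ, ← zpow_add₀ hQ, ← zpow_natCast (q:ℂ) (d*d)]
  congr 1
  have t := tri_cast k
  push_cast at t ⊢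
  linear_combination t

theorem termwise (q : ℝ) (hq0 : 0 < q) (hq1 : q < 1) (a x : ℂ) (ha : a ≠ 0) (hx : x ≠ 0)
    (k d : ℕ)
    (hBk : qp (q:ℂ) (x⁻¹ * (q:ℂ) ^ ((1:ℤ) - ((k+d:ℕ):ℤ))) k ≠ 0) :
    qp (q:ℂ) ((q:ℂ) ^ (-((k+d:ℕ):ℤ))) d * qp (q:ℂ) x d / qp (q:ℂ) (q:ℂ) d *
        (-((q:ℂ) ^ (k+d+1)) / a) ^ d =
      (-a) ^ (-((k+d:ℕ):ℤ)) * (q:ℂ) ^ ((k+d) ^ 2) * x ^ (k+d) *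
        qp (q:ℂ) (x⁻¹ * (q:ℂ) ^ ((1:ℤ) - ((k+d:ℕ):ℤ))) (k+d) *
        (qp (q:ℂ) ((q:ℂ) ^ (-((k+d:ℕ):ℤ))) k /
            (qp (q:ℂ) (q:ℂ) k * qp (q:ℂ) (x⁻¹ * (q:ℂ) ^ ((1:ℤ) - ((k+d:ℕ):ℤ))) k) *
          (-1) ^ k * (q:ℂ) ^ (k * (k - 1) / 2) *
          (-(a * (q:ℂ) ^ ((1:ℤ) - ((k+d:ℕ):ℤ))) / x) ^ k) := by
  have hQ : (q:ℂ) ≠ 0 := by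
    simpa using (Complex.ofReal_ne_zero.mpr (ne_of_gt hq0))
  set Q : ℂ := (q:ℂ) with hQdef
  set b : ℂ := x⁻¹ * Q ^ ((1:ℤ) - ((k+d:ℕ):ℤ)) with hbdef
  have h1 := lemA Q hQ (k+d) d (by omega)
  rw [Nat.add_sub_cancel] at h1
  have h2 := lemA Q hQ (k+d) k (by omega)
  rw [Nat.add_sub_cancel_left] at h2
  have h3 := lemB Q x hQ hx (k+d) d (by omega)
  rw [Nat.add_sub_cancel] at h3
  have hGk := qp_q_ne q hq0 hq1 k
  have hGd := qp_q_ne q hq0 hq1 d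
  have h11k : ((-1:ℂ))^k * (-1)^k = 1 := by rw [← mul_pow]; norm_num
  have h11d : ((-1:ℂ))^d * (-1)^d = 1 := by rw [← mul_pow]; norm_num
  have hs : (((-1:ℂ))^k * (-1)^d) * ((-1)^k * (-1)^d) = 1 := by
    calc (((-1:ℂ))^k * (-1)^d) * ((-1)^k * (-1)^d)
        = ((-1)^k * (-1)^k) * ((-1)^d * (-1)^d) := by ring
      _ = 1 := by rw [h11k, h11d, one_mul]
  have hpow : (-a)^(k+d) = ((-1:ℂ)^k * (-1)^d) * a^(k+d) := by
    rw [show (-a) = (-1)*a from by ring, mul_pow, pow_add]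
  have hnegam : (-a) ^ (-((k+d:ℕ):ℤ)) = (-1)^k * (-1)^d / a^(k+d) := by
    rw [zpow_neg, zpow_natCast, hpow, mul_inv, inv_eq_of_mul_eq_one_right hs,
      ← div_eq_mul_inv]
  have hzk : (-(a * Q ^ ((1:ℤ) - ((k+d:ℕ):ℤ))) / x) ^ k =
      (-1)^k * (a^k * (Q ^ ((1:ℤ) - ((k+d:ℕ):ℤ)))^k / x^k) := by
    rw [show -(a * Q ^ ((1:ℤ) - ((k+d:ℕ):ℤ))) / x
        = (-1) * (a * Q ^ ((1:ℤ) - ((k+d:ℕ):ℤ)) / x) from by ring,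
      mul_pow, div_pow, mul_pow]
  have hwd : (-(Q ^ (k+d+1)) / a) ^ d = (-1)^d * ((Q^(k+d+1))^d / a^d) := by
    rw [show -(Q ^ (k+d+1)) / a = (-1) * (Q^(k+d+1) / a) from by ring,
      mul_pow, div_pow]
  have hc : qp Q Q k * qp Q b k * qp Q Q d ≠ 0 :=
    mul_ne_zero (mul_ne_zero hGk hBk) hGd
  apply mul_right_cancel₀ hc
  have hR : ((-a) ^ (-((k+d:ℕ):ℤ)) * Q ^ ((k+d) ^ 2) * x ^ (k+d) * qp Q b (k+d) *
        (qp Q (Q ^ (-((k+d:ℕ):ℤ))) k / (qp Q Q k * qp Q b k) *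
          (-1) ^ k * Q ^ (k * (k - 1) / 2) *
          (-(a * Q ^ ((1:ℤ) - ((k+d:ℕ):ℤ))) / x) ^ k)) *
        (qp Q Q k * qp Q b k * qp Q Q d) =
      qp Q Q (k+d) * qp Q b (k+d) * x^(k+d) * a^k / (a^(k+d) * x^k) * (-1)^d
        * Q^(d*d) := by
    calc ((-a) ^ (-((k+d:ℕ):ℤ)) * Q ^ ((k+d) ^ 2) * x ^ (k+d) * qp Q b (k+d) *
        (qp Q (Q ^ (-((k+d:ℕ):ℤ))) k / (qp Q Q k * qp Q b k) *
          (-1) ^ k * Q ^ (k * (k - 1) / 2) *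
          (-(a * Q ^ ((1:ℤ) - ((k+d:ℕ):ℤ))) / x) ^ k)) *
        (qp Q Q k * qp Q b k * qp Q Q d)
        = ((-a) ^ (-((k+d:ℕ):ℤ)) * Q ^ ((k+d) ^ 2) * x ^ (k+d) * qp Q b (k+d)) *
            (qp Q (Q ^ (-((k+d:ℕ):ℤ))) k * qp Q Q d) *
            ((-1) ^ k * Q ^ (k * (k - 1) / 2) *
              (-(a * Q ^ ((1:ℤ) - ((k+d:ℕ):ℤ))) / x) ^ k) := by
          field_simp [show qp Q Q k ≠ 0 from hGk, show qp Q Q d ≠ 0 from hGd]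
      _ = (((-1:ℂ))^k * (-1)^d / a^(k+d) * Q ^ ((k+d) ^ 2) * x ^ (k+d) * qp Q b (k+d)) *
            (qp Q Q (k+d) * (-1)^k *
              Q ^ (((k*(k-1)/2 : ℕ) : ℤ) - ((k+d : ℕ):ℤ) * (k:ℤ))) *
            ((-1) ^ k * Q ^ (k * (k - 1) / 2) *
              ((-1)^k * (a^k * (Q ^ ((1:ℤ) - ((k+d:ℕ):ℤ)))^k / x^k))) := by
          rw [h2, hnegam, hzk]
      _ = (qp Q Q (k+d) * qp Q b (k+d) * x^(k+d) * a^k / (a^(k+d) * x^k)) *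
            (((-1)^k * (-1)^k) * (((-1)^k * (-1)^k) * (-1)^d)) *
            (Q ^ ((k+d)^2) *
              (Q ^ (((k*(k-1)/2 : ℕ) : ℤ) - ((k+d : ℕ):ℤ) * (k:ℤ)) *
                (Q ^ (k*(k-1)/2) * (Q ^ ((1:ℤ) - ((k+d:ℕ):ℤ))) ^ k))) := by
          field_simp
      _ = qp Q Q (k+d) * qp Q b (k+d) * x^(k+d) * a^k / (a^(k+d) * x^k) * (-1)^d
            * Q^(d*d) := by
          rw [h11k, hQR q hQ k d]
          ring
  rw [hR]
  calc (qp Q (Q ^ (-((k+d:ℕ):ℤ))) d * qp Q x d / qp Q Q d *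
        (-(Q ^ (k+d+1)) / a) ^ d) * (qp Q Q k * qp Q b k * qp Q Q d)
      = (qp Q (Q ^ (-((k+d:ℕ):ℤ))) d * qp Q Q k) * (qp Q x d * qp Q b k) *
          (-(Q ^ (k+d+1)) / a) ^ d := by
        field_simp [show qp Q Q k ≠ 0 from hGk, show qp Q Q d ≠ 0 from hGd]
    _ = (qp Q Q (k+d) * (-1)^d *
          Q ^ (((d*(d-1)/2 : ℕ) : ℤ) - ((k+d : ℕ):ℤ) * (d:ℤ))) *
          (qp Q b (k+d) * x^d * Q^(d*(d-1)/2) * (-1)^d) *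
          ((-1)^d * ((Q^(k+d+1))^d / a^d)) := by
        rw [h1, h3, hwd]
    _ = (qp Q Q (k+d) * qp Q b (k+d) * x^d / a^d) *
          (((-1)^d * (-1)^d) * (-1)^d) *
          (Q ^ (((d*(d-1)/2 : ℕ) : ℤ) - ((k+d : ℕ):ℤ) * (d:ℤ)) *
            (Q^(d*(d-1)/2) * (Q ^ (k+d+1)) ^ d)) := by
        field_simp
    _ = (qp Q Q (k+d) * qp Q b (k+d) * x^d / a^d) * (-1)^d * Q^(d*d) := by
        rw [h11d, one_mul, hQL q hQ k d]
    _ = qp Q Q (k+d) * qp Q b (k+d) * x^(k+d) * a^k / (a^(k+d) * x^k) * (-1)^d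
          * Q^(d*d) := by
        field_simp
        ring

/-- Inverted representation of the q-Charlier polynomials. -/
theorem stmt12 (q : ℝ) (hq0 : 0 < q) (hq1 : q < 1) (a x : ℂ)
    (ha : a ≠ 0) (hx : x ≠ 0) (m : ℕ)
    (hden : ∀ j : ℕ, j < m → x⁻¹ * (q : ℂ) ^ ((1 : ℤ) - m) ≠ (q : ℂ) ^ (-(j : ℤ))) :
    qCharlier q a x m =
      (-a) ^ (-(m : ℤ)) * (q : ℂ) ^ (m ^ 2) * x ^ m *
        qp q (x⁻¹ * (q : ℂ) ^ ((1 : ℤ) - m)) m *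
        phi11 q ((q : ℂ) ^ (-(m : ℤ))) (x⁻¹ * (q : ℂ) ^ ((1 : ℤ) - m))
          (-(a * (q : ℂ) ^ ((1 : ℤ) - m)) / x) := by
  rw [qCharlier, phi11]
  have hvan : ∀ k ∉ Finset.range (m+1),
      qp (q:ℂ) ((q:ℂ) ^ (-(m:ℤ))) k /
          (qp (q:ℂ) (q:ℂ) k * qp (q:ℂ) (x⁻¹ * (q:ℂ) ^ ((1:ℤ) - m)) k) *
          (-1) ^ k * (q:ℂ) ^ (k * (k - 1) / 2) *
          (-(a * (q:ℂ) ^ ((1:ℤ) - m)) / x) ^ k = 0 := by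
    intro k hk
    have hmk : m < k := by
      by_contra h
      exact hk (Finset.mem_range.mpr (by omega))
    rw [qp_vanish q hq0 m k hmk]
    simp
  rw [tsum_eq_sum hvan]
  rw [← Finset.sum_range_reflect]
  rw [Finset.mul_sum]
  apply Finset.sum_congr rfl
  intro k hk
  simp only [Nat.add_sub_cancel]
  have hk' : k ≤ m := by
    have := Finset.mem_range.mp hk; omega
  obtain ⟨d, rfl⟩ : ∃ d, m = k + d := ⟨m - k, by omega⟩
  simp only [Nat.add_sub_cancel_left]
  exact termwise q hq0 hq1 a x ha hx k d (qp_b_ne q hq0 x (k+d) hden k (by omega))
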